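/- The mass assigned by the Kaplan–Meier estimator to each observed failure time has the IPCW form: for every i with δ_i = 1, Ŝ(x_i−) − Ŝ(x_i) = 1/(n Ĝ(x_i−)), where Ĝ(x_i−) > 0. -/

import Mathlib

open Finset

/-- Number at risk at time `u`: `Y(u) = #{j : x_j ≥ u}`. -/
noncomputable def atRisk {n : ℕ} (x : Fin n → ℝ) (u : ℝ) : ℕ :=
  (univ.filter fun j => u ≤ x j).card

/-- Kaplan–Meier estimator of the failure-time survival function:
`Ŝ(t) = ∏_{i : x_i ≤ t, δ_i = 1} (1 − 1/Y(x_i))`. -/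
noncomputable def kmS {n : ℕ} (x : Fin n → ℝ) (δ : Fin n → Bool) (t : ℝ) : ℝ :=
  ∏ i ∈ univ.filter (fun i => x i ≤ t ∧ δ i = true), (1 - 1 / (atRisk x (x i) : ℝ))

/-- Left limit of the Kaplan–Meier estimator of the failure-time survival function:
`Ŝ(t−) = ∏_{i : x_i < t, δ_i = 1} (1 − 1/Y(x_i))`. -/
noncomputable def kmSminus {n : ℕ} (x : Fin n → ℝ) (δ : Fin n → Bool) (t : ℝ) : ℝ :=
  ∏ i ∈ univ.filter (fun i => x i < t ∧ δ i = true), (1 - 1 / (atRisk x (x i) : ℝ))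

/-- Left limit of the Kaplan–Meier estimator of the censoring survival function:
`Ĝ(t−) = ∏_{i : x_i < t, δ_i = 0} (1 − 1/Y(x_i))`. -/
noncomputable def kmGminus {n : ℕ} (x : Fin n → ℝ) (δ : Fin n → Bool) (t : ℝ) : ℝ :=
  ∏ i ∈ univ.filter (fun i => x i < t ∧ δ i = false), (1 - 1 / (atRisk x (x i) : ℝ))

/-! With distinct observation times, the factors `1 - 1/Y(x_j)` over all `x_j < t` telescope:
if `x_m` is the largest time below `t` then `Y(x_m) = Y(t) + 1`, so the factor at `x_m` is
`Y(t)/Y(x_m)` and the product is `Y(t)/n`. Splitting it by `δ_j` gives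
`n Ŝ(t−) Ĝ(t−) = Y(t)`, while `Ŝ(x_i) = Ŝ(x_i−) (1 - 1/Y(x_i))` at a failure `x_i`; hence
`Ŝ(x_i−) - Ŝ(x_i) = Ŝ(x_i−)/Y(x_i) = 1/(n Ĝ(x_i−))`. -/

section KaplanMeier

variable {n : ℕ}

lemma one_sub_inv_atRisk_nonneg (x : Fin n → ℝ) (u : ℝ) :
    0 ≤ 1 - 1 / (atRisk x u : ℝ) := by
  rw [sub_nonneg, one_div]
  exact Nat.cast_inv_le_one _

lemma atRisk_self_pos (x : Fin n → ℝ) (i : Fin n) : 0 < atRisk x (x i) :=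
  card_pos.mpr ⟨i, by simp⟩

lemma kmGminus_nonneg (x : Fin n → ℝ) (δ : Fin n → Bool) (t : ℝ) : 0 ≤ kmGminus x δ t :=
  prod_nonneg fun j _ => one_sub_inv_atRisk_nonneg x (x j)

lemma kmSminus_mul_kmGminus (x : Fin n → ℝ) (δ : Fin n → Bool) (t : ℝ) :
    kmSminus x δ t * kmGminus x δ t =
      ∏ j ∈ univ.filter (fun j => x j < t), (1 - 1 / (atRisk x (x j) : ℝ)) := by
  rw [← prod_filter_mul_prod_filter_not _ (fun j => δ j = true), filter_filter, filter_filter]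
  simp only [kmSminus, kmGminus, Bool.not_eq_true]

lemma kmS_eq_kmSminus_mul {x : Fin n → ℝ} (hinj : Function.Injective x) {δ : Fin n → Bool}
    {i : Fin n} (hi : δ i = true) :
    kmS x δ (x i) = kmSminus x δ (x i) * (1 - 1 / (atRisk x (x i) : ℝ)) := by
  have hfilter : univ.filter (fun j => x j ≤ x i ∧ δ j = true) =
      insert i (univ.filter fun j => x j < x i ∧ δ j = true) := by
    ext j
    simp only [mem_filter, mem_univ, true_and, mem_insert, le_iff_lt_or_eq, hinj.eq_iff]
    constructor
    · rintro ⟨hlt | rfl, hj⟩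
      exacts [Or.inr ⟨hlt, hj⟩, Or.inl rfl]
    · rintro (rfl | ⟨hlt, hj⟩)
      exacts [⟨Or.inr rfl, hi⟩, ⟨Or.inl hlt, hj⟩]
  rw [kmS, kmSminus, hfilter, prod_insert (by simp), mul_comm]

lemma le_iff_eq_or_le_of_isGreatest {x : Fin n → ℝ} (hinj : Function.Injective x) {t : ℝ}
    {m : Fin n} (hmt : x m < t) (hmax : ∀ k, x k < t → x k ≤ x m) (k : Fin n) :
    x m ≤ x k ↔ k = m ∨ t ≤ x k := by
  constructor
  · intro hmk
    by_contra! h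
    exact h.1 (hinj (le_antisymm (hmax k h.2) hmk))
  · rintro (rfl | htk)
    exacts [le_rfl, hmt.le.trans htk]

lemma natCast_mul_prod_one_sub_inv_atRisk {x : Fin n → ℝ} (hinj : Function.Injective x)
    (t : ℝ) :
    (n : ℝ) * ∏ j ∈ univ.filter (fun j => x j < t), (1 - 1 / (atRisk x (x j) : ℝ)) =
      atRisk x t := by
  induction hk : (univ.filter fun j => x j < t).card generalizing t with
  | zero =>
    have hall : ∀ j ∈ (univ : Finset (Fin n)), t ≤ x j := by
      simpa [card_eq_zero, filter_eq_empty_iff] using hk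
    simp [card_eq_zero.mp hk, atRisk, filter_true_of_mem hall]
  | succ k ih =>
    obtain ⟨m, hm, hmax⟩ :=
      exists_max_image (univ.filter fun j => x j < t) x (card_pos.mp (by omega))
    simp only [mem_filter, mem_univ, true_and] at hm hmax
    have hiff := le_iff_eq_or_le_of_isGreatest hinj hm hmax
    have hbelow : univ.filter (fun j => x j < x m) = (univ.filter fun j => x j < t).erase m := by
      ext j
      simp only [mem_filter, mem_univ, true_and, mem_erase, ← not_le, hiff]
      tauto
    have hatRisk : atRisk x (x m) = atRisk x t + 1 := by
      have : univ.filter (fun j => x m ≤ x j) = insert m (univ.filter fun j => t ≤ x j) := by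
        ext j
        simp [hiff]
      rw [atRisk, this, card_insert_of_notMem (by simpa using hm), atRisk]
    have hprev := ih (x m) (by rw [hbelow, card_erase_of_mem (by simpa using hm), hk]; rfl)
    rw [hbelow] at hprev
    rw [← mul_prod_erase _ _ (by simpa using hm), mul_left_comm, hprev, hatRisk]
    push_cast
    field_simp
    ring

end KaplanMeier

theorem km_mass_ipcw_general {n : ℕ}
    (x : Fin n → ℝ) (δ : Fin n → Bool)
    (hinj : Function.Injective x) :
    ∀ i, δ i = true →
      0 < kmGminus x δ (x i) ∧
      kmSminus x δ (x i) - kmS x δ (x i) = 1 / (n * kmGminus x δ (x i)) := by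
  intro i hi
  have hY : (0 : ℝ) < atRisk x (x i) := by exact_mod_cast atRisk_self_pos x i
  have hsplit : (n : ℝ) * (kmSminus x δ (x i) * kmGminus x δ (x i)) = atRisk x (x i) := by
    rw [kmSminus_mul_kmGminus, natCast_mul_prod_one_sub_inv_atRisk hinj]
  have hnSG : (n : ℝ) * (kmSminus x δ (x i) * kmGminus x δ (x i)) ≠ 0 := hsplit ▸ hY.ne'
  have hG : 0 < kmGminus x δ (x i) :=
    (kmGminus_nonneg x δ _).lt_of_ne' (right_ne_zero_of_mul (right_ne_zero_of_mul hnSG))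
  refine ⟨hG, ?_⟩
  rw [kmS_eq_kmSminus_mul hinj hi, eq_div_iff (mul_ne_zero (left_ne_zero_of_mul hnSG) hG.ne')]
  field_simp
  linear_combination hsplit

/-- **IPCW form of the Kaplan–Meier mass at each observed failure time:**
for every `i` with `δ_i = 1`, `Ĝ(x_i−) > 0` and
`Ŝ(x_i−) − Ŝ(x_i) = 1/(n Ĝ(x_i−))`. -/
theorem km_mass_ipcw {n : ℕ} (hn : 0 < n)
    (x : Fin n → ℝ) (δ : Fin n → Bool)
    (hpos : ∀ i, 0 < x i) (hinj : Function.Injective x) :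
    ∀ i, δ i = true →
      0 < kmGminus x δ (x i) ∧
      kmSminus x δ (x i) - kmS x δ (x i) = 1 / (n * kmGminus x δ (x i)) :=
  km_mass_ipcw_general x δ hinj
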